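/- Fix n, and let B denote the ZMod 2-bilinear form on the free ZMod 2-module on words of length n (for instance (Fin n → Bool) →₀ ZMod 2) determined on basis words by B w₀ w₁ = ⟨w₀|w₁⟩. Then B is nondegenerate: if x satisfies B x y = 0 for all y then x = 0, and if x satisfies B y x = 0 for all y then x = 0. -/
import Mathlib

/-- A single pawn move: a pawn (`true`) advances one square rightward into an
empty square (`false`). -/
def PawnMove (w₀ w₁ : List Bool) : Prop :=
  ∃ u v : List Bool, w₀ = u ++ [true, false] ++ v ∧ w₁ = u ++ [false, true] ++ v

/-- Reachability: the reflexive-transitive closure of the single-move relation. -/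
def Reach : List Bool → List Bool → Prop :=
  Relation.ReflTransGen PawnMove

/-- The `ZMod 2` pairing `⟨w₀|w₁⟩`: `1` if `w₁` is reachable from `w₀`, else `0`. -/
noncomputable def pairing (w₀ w₁ : List Bool) : ZMod 2 :=
  open Classical in if Reach w₀ w₁ then 1 else 0

/-- The pairing on words of fixed length `n`, encoded as functions `Fin n → Bool`. -/
noncomputable def pairingF {n : ℕ} (w₀ w₁ : Fin n → Bool) : ZMod 2 :=
  pairing (List.ofFn w₀) (List.ofFn w₁)

private def wt : ℕ → List Bool → ℕ
  | _, [] => 0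
  | k, b :: l => (if b then k else 0) + wt (k+1) l

set_option linter.unreachableTactic false in
set_option linter.unusedTactic false in
private lemma wt_append (k : ℕ) (u v : List Bool) :
    wt k (u ++ v) = wt k u + wt (k + u.length) v := by
  induction u generalizing k with
  | nil => simp [wt]
  | cons b u ih =>
      cases b <;> simp [wt, ih (k+1)] <;> ring_nf <;> omega

private lemma wt_pawnMove {a b : List Bool} (h : PawnMove a b) : wt 0 a + 1 = wt 0 b := by
  obtain ⟨u, v, ha, hb⟩ := h
  subst ha hb
  simp [wt_append, wt]
  omega

private lemma wt_reach {a b : List Bool} (h : Reach a b) : a = b ∨ wt 0 a < wt 0 b := by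
  induction h with
  | refl => exact Or.inl rfl
  | tail h1 h2 ih =>
      have := wt_pawnMove h2
      rcases ih with rfl | hlt
      · right; omega
      · right; omega

private lemma pairingF_self {n : ℕ} (w : Fin n → Bool) : pairingF w w = 1 := by
  simp [pairingF, pairing, Reach, Relation.ReflTransGen.refl]

private lemma pairingF_eq_zero_of_not_reach {n : ℕ} {a b : Fin n → Bool}
    (h : ¬ Reach (List.ofFn a) (List.ofFn b)) : pairingF a b = 0 := by
  simp [pairingF, pairing, h]

theorem pairing_bilinear_nondegenerate (n : ℕ)
    (B : ((Fin n → Bool) →₀ ZMod 2) →ₗ[ZMod 2]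
          ((Fin n → Bool) →₀ ZMod 2) →ₗ[ZMod 2] ZMod 2)
    (hB : ∀ w₀ w₁ : Fin n → Bool,
      B (Finsupp.single w₀ 1) (Finsupp.single w₁ 1) = pairingF w₀ w₁) :
    (∀ x, (∀ y, B x y = 0) → x = 0) ∧
    (∀ x, (∀ y, B y x = 0) → x = 0) := by
  constructor
  · intro x hx
    by_contra hx0
    obtain ⟨w, hw, hmin⟩ := Finset.exists_min_image x.support (fun a => wt 0 (List.ofFn a))
      (Finsupp.support_nonempty_iff.mpr hx0)
    have h1 : B x (Finsupp.single w 1) = 0 := hx _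
    have h2 : B x (Finsupp.single w 1) = x.sum fun a c => c * pairingF a w := by
      have hgx : B.flip (Finsupp.single w 1) x
          = x.sum fun a c => c * pairingF a w := by
        conv_lhs => rw [← Finsupp.sum_single x]
        rw [map_finsuppSum]
        refine Finsupp.sum_congr ?_
        intro a ha
        have : Finsupp.single a (x a) = (x a) • Finsupp.single a (1 : ZMod 2) := by
          rw [Finsupp.smul_single', mul_one]
        rw [this, map_smul, smul_eq_mul]
        simp [LinearMap.flip_apply, hB]
      simpa [LinearMap.flip_apply] using hgx
    have h3 : (x.sum fun a c => c * pairingF a w) = x w := by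
      rw [Finsupp.sum]
      rw [Finset.sum_eq_single w]
      · rw [pairingF_self, mul_one]
      · intro a ha hne
        have hz : ¬ Reach (List.ofFn a) (List.ofFn w) := by
          intro hr
          rcases wt_reach hr with heq | hlt
          · exact hne (List.ofFn_injective heq)
          · exact absurd (hmin a ha) (by omega)
        rw [pairingF_eq_zero_of_not_reach hz, mul_zero]
      · intro h; exact absurd hw h
    rw [h2, h3] at h1
    exact (Finsupp.mem_support_iff.mp hw) h1
  · intro x hx
    by_contra hx0
    obtain ⟨w, hw, hmax⟩ := Finset.exists_max_image x.support (fun a => wt 0 (List.ofFn a))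
      (Finsupp.support_nonempty_iff.mpr hx0)
    have h1 : B (Finsupp.single w 1) x = 0 := hx _
    have h2 : B (Finsupp.single w 1) x = x.sum fun a c => c * pairingF w a := by
      conv_lhs => rw [← Finsupp.sum_single x]
      rw [map_finsuppSum]
      refine Finsupp.sum_congr ?_
      intro a ha
      have : Finsupp.single a (x a) = (x a) • Finsupp.single a (1 : ZMod 2) := by
        rw [Finsupp.smul_single', mul_one]
      rw [this, map_smul, smul_eq_mul, hB]
    have h3 : (x.sum fun a c => c * pairingF w a) = x w := by
      rw [Finsupp.sum]
      rw [Finset.sum_eq_single w]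
      · rw [pairingF_self, mul_one]
      · intro a ha hne
        have hz : ¬ Reach (List.ofFn w) (List.ofFn a) := by
          intro hr
          rcases wt_reach hr with heq | hlt
          · exact hne (List.ofFn_injective heq).symm
          · exact absurd (hmax a ha) (by omega)
        rw [pairingF_eq_zero_of_not_reach hz, mul_zero]
      · intro h; exact absurd hw h
    rw [h2, h3] at h1
    exact (Finsupp.mem_support_iff.mp hw) h1
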